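/- arXiv:2009.10845 — 5 statements merged into one kernel-verified Lean document; each statement's English description precedes it below -/
import Mathlib

section
/- For any graph G on n vertices with average degree d = 2e(G)/n, the number of walks of length k in G is at least n·d^k. -/
/-!
Let `e` be the number of edges, `π v = deg v / 2e` the stationary distribution of the simple
random walk, and `Γ f = ∏ v, f v ^ π v` the `π`-weighted geometric mean. Let `W k v` be the
number of walks of length `k` ending at `v`. Since `W (k+1) v` is `deg v` times the average of
`W k` over the neighbours of `v`, AM–GM at every vertex gives
`W (k+1) v ≥ deg v * ∏_{u ~ v} W k u ^ (1 / deg v)`; taking `Γ` of both sides, each edge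
contributes the exponent `π v / deg v = 1/2e` from either end, so `Γ (W (k+1)) ≥ Γ deg * Γ (W k)`
and hence `Γ (W k) ≥ (Γ deg)^k`. Double counting gives `∑ W (k+1) = ∑ deg * W k = 2e ∑ π W k`,
which is at least `2e Γ (W k)` by AM–GM again. Finally `Γ deg ≥ 2e/n`, since AM–GM applied to
`1 / deg` gives `(Γ deg)⁻¹ ≤ ∑ π / deg ≤ n/2e`.
-/

/-- The number of walks of length `k` in a graph `G` on vertex set `Fin n`:
sequences of `k+1` vertices in which consecutive vertices are adjacent. -/
noncomputable def walkCount (n k : ℕ) (G : SimpleGraph (Fin n)) : ℕ :=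
  Nat.card {f : Fin (k + 1) → Fin n //
    ∀ i : Fin k, G.Adj (f i.castSucc) (f i.succ)}

open Finset Matrix

theorem Matrix.sum_mul_prod_fin_eq_sum_vecMul_pow {V R : Type*} [Fintype V] [DecidableEq V]
    [CommSemiring R] (A : Matrix V V R) (y : V → R) (k : ℕ) :
    ∑ f : Fin (k + 1) → V, y (f 0) * ∏ i : Fin k, A (f i.castSucc) (f i.succ) =
      ∑ v, (y ᵥ* A ^ k) v := by
  induction k generalizing y with
  | zero =>
    simp only [univ_eq_empty, prod_empty, mul_one, pow_zero, vecMul_one]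
    exact Fintype.sum_equiv (Equiv.funUnique (Fin 1) V) _ _ fun _ => rfl
  | succ k ih =>
    calc ∑ f : Fin (k + 2) → V, y (f 0) * ∏ i : Fin (k + 1), A (f i.castSucc) (f i.succ)
        = ∑ p : V × (Fin (k + 1) → V),
            y p.1 * (A p.1 (p.2 0) * ∏ i : Fin k, A (p.2 i.castSucc) (p.2 i.succ)) := by
          refine (Fintype.sum_equiv (Fin.consEquiv fun _ => V) _ _ fun p => ?_).symm
          simp [Fin.consEquiv, Fin.prod_univ_succ]
      _ = ∑ g : Fin (k + 1) → V, (y ᵥ* A) (g 0) * ∏ i : Fin k, A (g i.castSucc) (g i.succ) := by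
          rw [Fintype.sum_prod_type, sum_comm]
          simp only [vecMul, dotProduct, sum_mul, mul_assoc]
      _ = ∑ v, (y ᵥ* A ^ (k + 1)) v := by rw [ih, pow_succ', vecMul_vecMul]

namespace SimpleGraph

variable {V : Type*} [Fintype V] (G : SimpleGraph V) [DecidableRel G.Adj]

@[to_additive]
theorem prod_prod_neighborFinset {M : Type*} [CommMonoid M] (f : V → M) :
    ∏ v, ∏ u ∈ G.neighborFinset v, f u = ∏ u, f u ^ G.degree u := by
  rw [prod_comm' (t' := univ) (s' := fun u => G.neighborFinset u)]
  · simp [card_neighborFinset_eq_degree]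
  · simp [G.adj_comm]

theorem card_ne_zero_of_edgeFinset_nonempty (hG : G.edgeFinset.Nonempty) :
    Fintype.card V ≠ 0 := by
  intro hV
  have := G.card_edgeFinset_le_card_choose_two
  simp [hV, hG.ne_empty] at this

noncomputable def stationaryWeight (v : V) : ℝ := G.degree v / (2 * #G.edgeFinset)

/-- Isolated vertices have weight `0` and contribute the factor `x ^ 0 = 1`, also when `x = 0`. -/
noncomputable def stationaryGeomMean (f : V → ℝ) : ℝ := ∏ v, f v ^ G.stationaryWeight v

noncomputable def degreeGeomMean : ℝ := G.stationaryGeomMean fun v => (G.degree v : ℝ)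

theorem stationaryWeight_nonneg (v : V) : 0 ≤ G.stationaryWeight v := by
  unfold stationaryWeight; positivity

theorem sum_stationaryWeight (hG : G.edgeFinset.Nonempty) : ∑ v, G.stationaryWeight v = 1 := by
  have : (2 * #G.edgeFinset : ℝ) ≠ 0 := by positivity
  simp only [stationaryWeight, ← sum_div]
  exact (div_eq_one_iff_eq this).2 (by exact_mod_cast G.sum_degrees_eq_twice_card_edges)

theorem stationaryGeomMean_le_sum (hG : G.edgeFinset.Nonempty) {f : V → ℝ} (hf : 0 ≤ f) :
    G.stationaryGeomMean f ≤ ∑ v, G.stationaryWeight v * f v :=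
  Real.geom_mean_le_arith_mean_weighted _ _ _ (fun v _ => G.stationaryWeight_nonneg v)
    (G.sum_stationaryWeight hG) fun v _ => hf v

theorem degreeGeomMean_pos : 0 < G.degreeGeomMean := by
  refine prod_pos fun v _ => ?_
  rcases (G.degree v).eq_zero_or_pos with hv | hv
  · simp [stationaryWeight, hv]
  · exact Real.rpow_pos_of_pos (Nat.cast_pos.2 hv) _

theorem avgDegree_le_degreeGeomMean (hG : G.edgeFinset.Nonempty) :
    2 * #G.edgeFinset / Fintype.card V ≤ G.degreeGeomMean := by
  have hE : (0 : ℝ) < 2 * #G.edgeFinset := by positivity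
  have hV : (0 : ℝ) < Fintype.card V := by
    exact_mod_cast Nat.pos_of_ne_zero (G.card_ne_zero_of_edgeFinset_nonempty hG)
  have hinv : G.stationaryGeomMean (fun v => (G.degree v : ℝ)⁻¹) = G.degreeGeomMean⁻¹ := by
    simp only [stationaryGeomMean, degreeGeomMean,
      Real.inv_rpow (Nat.cast_nonneg _), prod_inv_distrib]
  have hsum : ∑ v, G.stationaryWeight v * (G.degree v : ℝ)⁻¹ ≤
      Fintype.card V / (2 * #G.edgeFinset) :=
    calc ∑ v, G.stationaryWeight v * (G.degree v : ℝ)⁻¹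
        ≤ ∑ _v : V, 1 / (2 * #G.edgeFinset : ℝ) := by
          refine sum_le_sum fun v _ => ?_
          calc G.stationaryWeight v * (G.degree v : ℝ)⁻¹
              = (G.degree v / G.degree v : ℝ) / (2 * #G.edgeFinset) := by
                rw [stationaryWeight]; ring
            _ ≤ 1 / (2 * #G.edgeFinset) := by gcongr; exact div_self_le_one _
      _ = Fintype.card V / (2 * #G.edgeFinset) := by simp [div_eq_mul_inv]
  have hAMGM := G.stationaryGeomMean_le_sum hG (f := fun v => (G.degree v : ℝ)⁻¹)
    fun v => inv_nonneg.2 (Nat.cast_nonneg _)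
  rw [← inv_le_inv₀ G.degreeGeomMean_pos (by positivity), inv_div]
  exact hinv ▸ hAMGM.trans hsum

theorem degree_mul_prod_rpow_le_vecMul_adjMatrix {f : V → ℝ} (hf : 0 ≤ f) (v : V) :
    G.degree v * ∏ u ∈ G.neighborFinset v, f u ^ (G.degree v : ℝ)⁻¹ ≤
      (f ᵥ* G.adjMatrix ℝ) v := by
  rw [adjMatrix_vecMul_apply]
  rcases (G.degree v).eq_zero_or_pos with hv | hv
  · simpa [hv] using sum_nonneg fun u _ => hf u
  have hd : (G.degree v : ℝ) ≠ 0 := by positivity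
  have hAMGM := Real.geom_mean_le_arith_mean_weighted (G.neighborFinset v)
    (fun _ => (G.degree v : ℝ)⁻¹) f (fun _ _ => by positivity)
    (by simp [card_neighborFinset_eq_degree, hd]) fun u _ => hf u
  rw [← mul_sum] at hAMGM
  calc _ ≤ (G.degree v : ℝ) * ((G.degree v : ℝ)⁻¹ * ∑ u ∈ G.neighborFinset v, f u) := by
        gcongr
    _ = ∑ u ∈ G.neighborFinset v, f u := by field_simp

theorem prod_rpow_prod_neighborFinset {f : V → ℝ} (hf : 0 ≤ f) :
    ∏ v, (∏ u ∈ G.neighborFinset v, f u ^ (G.degree v : ℝ)⁻¹) ^ G.stationaryWeight v =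
      G.stationaryGeomMean f := by
  have hexp : ∀ v, ∀ u ∈ G.neighborFinset v,
      (G.degree v : ℝ)⁻¹ * G.stationaryWeight v = (2 * #G.edgeFinset : ℝ)⁻¹ := by
    intro v u hu
    have : (G.degree v : ℝ) ≠ 0 := Nat.cast_ne_zero.2
      ((G.degree_pos_iff_exists_adj v).2 ⟨u, (G.mem_neighborFinset v u).1 hu⟩).ne'
    rw [stationaryWeight]; field_simp
  calc _ = ∏ v, ∏ u ∈ G.neighborFinset v, f u ^ (2 * #G.edgeFinset : ℝ)⁻¹ := by
        refine prod_congr rfl fun v _ => ?_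
        rw [← Real.finsetProd_rpow _ _ fun u _ => Real.rpow_nonneg (hf u) _]
        refine prod_congr rfl fun u hu => ?_
        rw [← Real.rpow_mul (hf u), hexp v u hu]
    _ = ∏ u, (f u ^ (2 * #G.edgeFinset : ℝ)⁻¹) ^ G.degree u := G.prod_prod_neighborFinset _
    _ = G.stationaryGeomMean f := by
        refine prod_congr rfl fun u _ => ?_
        rw [← Real.rpow_mul_natCast (hf u), stationaryWeight, inv_mul_eq_div]

theorem degreeGeomMean_mul_le {f : V → ℝ} (hf : 0 ≤ f) :
    G.degreeGeomMean * G.stationaryGeomMean f ≤ G.stationaryGeomMean (f ᵥ* G.adjMatrix ℝ) := by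
  rw [← G.prod_rpow_prod_neighborFinset hf, degreeGeomMean, stationaryGeomMean,
    ← prod_mul_distrib]
  have hprod : ∀ v, 0 ≤ ∏ u ∈ G.neighborFinset v, f u ^ (G.degree v : ℝ)⁻¹ :=
    fun v => prod_nonneg fun u _ => Real.rpow_nonneg (hf u) _
  refine prod_le_prod (fun v _ => by have := hprod v; positivity) fun v _ => ?_
  rw [← Real.mul_rpow (Nat.cast_nonneg _) (hprod v)]
  exact Real.rpow_le_rpow (by have := hprod v; positivity)
    (G.degree_mul_prod_rpow_le_vecMul_adjMatrix hf v) (G.stationaryWeight_nonneg v)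

variable [DecidableEq V]

/-- Entry `v` counts the walks of length `k` ending at `v`. -/
noncomputable def walkCountVec (k : ℕ) : V → ℝ := 1 ᵥ* G.adjMatrix ℝ ^ k

theorem walkCountVec_succ (k : ℕ) :
    G.walkCountVec (k + 1) = G.walkCountVec k ᵥ* G.adjMatrix ℝ := by
  rw [walkCountVec, pow_succ, ← vecMul_vecMul, walkCountVec]

theorem walkCountVec_nonneg (k : ℕ) : 0 ≤ G.walkCountVec k := by
  induction k with
  | zero => simp [walkCountVec]
  | succ k ih =>
    intro v
    rw [walkCountVec_succ, adjMatrix_vecMul_apply]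
    exact sum_nonneg fun u _ => ih u

theorem degreeGeomMean_pow_le (k : ℕ) :
    G.degreeGeomMean ^ k ≤ G.stationaryGeomMean (G.walkCountVec k) := by
  induction k with
  | zero => simp [walkCountVec, stationaryGeomMean]
  | succ k ih =>
    calc G.degreeGeomMean ^ (k + 1) = G.degreeGeomMean * G.degreeGeomMean ^ k := pow_succ' _ _
      _ ≤ G.degreeGeomMean * G.stationaryGeomMean (G.walkCountVec k) := by
        gcongr; exact G.degreeGeomMean_pos.le
      _ ≤ G.stationaryGeomMean (G.walkCountVec (k + 1)) := by
        rw [walkCountVec_succ]; exact G.degreeGeomMean_mul_le (G.walkCountVec_nonneg k)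

theorem sum_walkCountVec_succ (hG : G.edgeFinset.Nonempty) (k : ℕ) :
    ∑ v, G.walkCountVec (k + 1) v =
      2 * #G.edgeFinset * ∑ v, G.stationaryWeight v * G.walkCountVec k v := by
  have : (2 * #G.edgeFinset : ℝ) ≠ 0 := by positivity
  simp only [walkCountVec_succ, adjMatrix_vecMul_apply, sum_sum_neighborFinset, mul_sum,
    stationaryWeight, nsmul_eq_mul]
  exact sum_congr rfl fun v _ => by field_simp

theorem card_mul_avgDegree_pow_le_sum_walkCountVec (k : ℕ) :
    Fintype.card V * (2 * #G.edgeFinset / Fintype.card V : ℝ) ^ k ≤ ∑ v, G.walkCountVec k v := by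
  rcases k with _ | k
  · simp [walkCountVec]
  rcases G.edgeFinset.eq_empty_or_nonempty with hG | hG
  · simpa [hG] using sum_nonneg fun v _ => G.walkCountVec_nonneg _ v
  have hV : (Fintype.card V : ℝ) ≠ 0 :=
    Nat.cast_ne_zero.2 (G.card_ne_zero_of_edgeFinset_nonempty hG)
  calc Fintype.card V * (2 * #G.edgeFinset / Fintype.card V : ℝ) ^ (k + 1)
      = 2 * #G.edgeFinset * (2 * #G.edgeFinset / Fintype.card V : ℝ) ^ k := by
        rw [pow_succ']; field_simp
    _ ≤ 2 * #G.edgeFinset * G.degreeGeomMean ^ k := by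
        gcongr; exact G.avgDegree_le_degreeGeomMean hG
    _ ≤ 2 * #G.edgeFinset * ∑ v, G.stationaryWeight v * G.walkCountVec k v := by
        gcongr
        exact (G.degreeGeomMean_pow_le k).trans
          (G.stationaryGeomMean_le_sum hG (G.walkCountVec_nonneg k))
    _ = ∑ v, G.walkCountVec (k + 1) v := (G.sum_walkCountVec_succ hG k).symm

end SimpleGraph

theorem walkCount_eq_sum_walkCountVec (n k : ℕ) (G : SimpleGraph (Fin n)) [DecidableRel G.Adj] :
    (walkCount n k G : ℝ) = ∑ v, G.walkCountVec k v := by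
  rw [SimpleGraph.walkCountVec, ← Matrix.sum_mul_prod_fin_eq_sum_vecMul_pow, walkCount,
    Nat.card_eq_fintype_card, Fintype.card_subtype]
  simp [SimpleGraph.adjMatrix_apply, Fintype.prod_boole]

/-- Blakley–Roy inequality: the number of walks of length `k` is at least
`n * d^k`, where `d = 2 e(G) / n` is the average degree. -/
theorem blakley_roy (n k : ℕ) (G : SimpleGraph (Fin n)) :
    (walkCount n k G : ℝ) ≥ n * (2 * (Nat.card G.edgeSet) / n) ^ k := by
  classical
  rw [walkCount_eq_sum_walkCountVec, Nat.card_eq_fintype_card, ← SimpleGraph.edgeFinset_card]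
  simpa using G.card_mul_avgDegree_pow_le_sum_walkCountVec k
end

section
/- Let t ≥ 1 and let P_t be the path with vertex set {1,...,t+1} and edges {i,i+1} for i ∈ {1,...,t}. For any normalized P_t-polymatroidal function p, we have p({1,...,t+1}) = Σ_{i=1}^{t} p({i,i+1}) − Σ_{i=2}^{t} p({i}). -/
/-!
Order the vertices of the path. Adding the vertex `i + 1` to the prefix `{0, …, i}` is the union
with the edge `{i, i + 1}`, which meets the prefix in `{i}`; since `{i}` separates the rest of the
prefix from `i + 1`, polymatroidality makes `p` modular on this pair, so each step raises `p` by
`p {i, i + 1} - p {i}`. Telescoping from `p {0}` to `p univ` gives the formula.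
-/

/-- A normalized `F`-polymatroidal function: `p ∅ = 0`, `p V = 1`, monotone,
submodular, and modular on pairs `A, B` such that `A ∩ B` separates
`A \ B` from `B \ A` in `F`. -/
def IsPolymatroidal {V : Type*} [Fintype V] [DecidableEq V]
    (F : SimpleGraph V) (p : Finset V → ℝ) : Prop :=
  p ∅ = 0 ∧ p Finset.univ = 1 ∧
  (∀ A B : Finset V, A ⊆ B → p A ≤ p B) ∧
  (∀ A B : Finset V, p (A ∩ B) + p (A ∪ B) ≤ p A + p B) ∧
  (∀ A B : Finset V, (∀ a ∈ A \ B, ∀ b ∈ B \ A, ¬F.Adj a b) →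
    p (A ∩ B) + p (A ∪ B) = p A + p B)

open Finset

theorem Fin.sum_univ_succ_sub_castSucc {M : Type*} [AddCommGroup M] :
    ∀ {n : ℕ} (f : Fin (n + 1) → M),
      ∑ i : Fin n, (f i.succ - f i.castSucc) = f (Fin.last n) - f 0
  | 0, f => by simp
  | n + 1, f => by
    rw [Fin.sum_univ_castSucc]
    simp only [Fin.succ_castSucc]
    rw [Fin.sum_univ_succ_sub_castSucc (fun i => f i.castSucc), Fin.succ_last, Fin.castSucc_zero]
    abel

theorem IsPolymatroidal.add_eq_add_of_separated {V : Type*} [Fintype V] [DecidableEq V]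
    {F : SimpleGraph V} {p : Finset V → ℝ} (hp : IsPolymatroidal F p) {A B : Finset V}
    (hsep : ∀ a ∈ A \ B, ∀ b ∈ B \ A, ¬F.Adj a b) :
    p (A ∩ B) + p (A ∪ B) = p A + p B :=
  hp.2.2.2.2 A B hsep

theorem Fin.Iic_castSucc_inter_pair {n : ℕ} (i : Fin n) :
    Iic i.castSucc ∩ {i.castSucc, i.succ} = {i.castSucc} := by
  ext x
  simp only [mem_inter, mem_Iic, mem_insert, mem_singleton]
  constructor
  · rintro ⟨hle, rfl | rfl⟩
    · rfl
    · exact absurd hle Fin.castSucc_lt_succ.not_ge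
  · rintro rfl
    exact ⟨le_rfl, Or.inl rfl⟩

theorem Fin.Iic_castSucc_union_pair {n : ℕ} (i : Fin n) :
    Iic i.castSucc ∪ {i.castSucc, i.succ} = Iic i.succ := by
  ext x
  simp only [mem_union, mem_Iic, mem_insert, mem_singleton, Fin.le_def, Fin.ext_iff,
    Fin.val_castSucc, Fin.val_succ]
  omega

theorem pathGraph_separated_Iic_castSucc_pair {n : ℕ} (i : Fin n) :
    ∀ a ∈ Iic i.castSucc \ {i.castSucc, i.succ}, ∀ b ∈ {i.castSucc, i.succ} \ Iic i.castSucc,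
      ¬(SimpleGraph.pathGraph (n + 1)).Adj a b := by
  intro a ha b hb
  simp only [mem_sdiff, mem_Iic, mem_insert, mem_singleton, Fin.le_def, Fin.ext_iff,
    Fin.val_castSucc, Fin.val_succ] at ha hb
  rw [SimpleGraph.pathGraph_adj]
  omega

theorem IsPolymatroidal.pathGraph_Iic_succ {n : ℕ} {p : Finset (Fin (n + 1)) → ℝ}
    (hp : IsPolymatroidal (SimpleGraph.pathGraph (n + 1)) p) (i : Fin n) :
    p (Iic i.succ) - p (Iic i.castSucc) = p {i.castSucc, i.succ} - p {i.castSucc} := by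
  have hmod := hp.add_eq_add_of_separated (pathGraph_separated_Iic_castSucc_pair i)
  rw [Fin.Iic_castSucc_inter_pair, Fin.Iic_castSucc_union_pair] at hmod
  linarith

theorem IsPolymatroidal.pathGraph_univ {n : ℕ} {p : Finset (Fin (n + 1)) → ℝ}
    (hp : IsPolymatroidal (SimpleGraph.pathGraph (n + 1)) p) :
    p univ = p {0} + ∑ i : Fin n, (p {i.castSucc, i.succ} - p {i.castSucc}) := by
  have htele := Fin.sum_univ_succ_sub_castSucc (fun i => p (Iic i))
  simp only [hp.pathGraph_Iic_succ] at htele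
  rw [← bot_eq_zero, Iic_bot, ← Fin.top_eq_last, Iic_top, bot_eq_zero] at htele
  linarith

/-- For any normalized `P_t`-polymatroidal function `p`,
`p(V(P_t)) = Σ_{edges} p({i,i+1}) − Σ_{inner vertices} p({i})`.
Here `P_t` is `SimpleGraph.pathGraph (t+1)`, on vertices `Fin (t+1)`. -/
theorem polymatroid_path_decomposition (t : ℕ) (ht : 1 ≤ t)
    (p : Finset (Fin (t + 1)) → ℝ)
    (hp : IsPolymatroidal (SimpleGraph.pathGraph (t + 1)) p) :
    p Finset.univ =
      (∑ i : Fin t, p {i.castSucc, i.succ}) -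
        ∑ i ∈ Finset.univ.filter (fun i : Fin t => (i : ℕ) ≠ 0), p {i.castSucc} := by
  obtain ⟨m, rfl⟩ := Nat.exists_eq_add_of_le' ht
  have hinner : ∑ i ∈ univ.filter (fun i : Fin (m + 1) => (i : ℕ) ≠ 0), p {i.castSucc} =
      ∑ i : Fin m, p {i.succ.castSucc} := by
    rw [sum_filter, Fin.sum_univ_succ]
    simp
  rw [hp.pathGraph_univ, hinner, sum_sub_distrib, Fin.sum_univ_succ (fun i => p {i.castSucc})]
  simp only [Fin.castSucc_zero]
  ring
end

section
/- For odd t ≥ 1, and for the function p*(S) = |S|/(t+1) on subsets of V(P_t), every homomorphism φ from the disjoint union of two isolated vertices and t copies of P_{t+2} to P_t satisfies Σ_{S ⊆ MaxCliques} −(−1)^{|S|} p*(φ(∩S)) = t+2, where the sum is over subsets S of the maximal cliques of the source graph and ∩S is the intersection of the cliques in S. -/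
/-- `F₁ t`: the disjoint union of two isolated vertices and `t` copies of the
path `P_{t+2}` (the path with `t+2` edges, i.e. `SimpleGraph.pathGraph (t+3)`). -/
def F₁ (t : ℕ) : SimpleGraph (Fin 2 ⊕ Fin t × Fin (t + 3)) :=
  (⊥ : SimpleGraph (Fin 2)) ⊕g ((⊥ : SimpleGraph (Fin t)) □ SimpleGraph.pathGraph (t + 3))

open Classical in
/-- The maximal cliques of a finite graph `F`, as a finset of finsets. -/
noncomputable def maxCliques {V : Type*} [Fintype V] (F : SimpleGraph V) :
    Finset (Finset V) :=
  Finset.univ.filter fun s =>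
    F.IsClique (s : Set V) ∧ ∀ u : V, F.IsClique (insert u (s : Set V)) → u ∈ s

open Classical in
/-- `Σ_{∅ ≠ S ⊆ MaxCliques(F)} −(−1)^{|S|} p(φ(∩S))`, where `∩S` is the common
intersection of the cliques in `S` and `φ(·)` denotes the image under `φ`. -/
noncomputable def cliqueSum {V W : Type*} [Fintype V] [DecidableEq V]
    [DecidableEq W] (F : SimpleGraph V) (p : Finset W → ℝ) (φ : V → W) : ℝ :=
  ∑ S ∈ (maxCliques F).powerset.filter (· ≠ ∅),
    -(-1 : ℝ) ^ S.card * p ((S.inf id).image φ)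

/-- Every vertex of a finite graph lies in some maximal clique. -/
lemma exists_mem_maxCliques {V : Type*} [Fintype V] (F : SimpleGraph V) (v : V) :
    ∃ C ∈ maxCliques F, v ∈ C := by
  classical
  set T : Finset (Finset V) :=
    Finset.univ.filter (fun s => F.IsClique (s : Set V) ∧ v ∈ s) with hT
  have hTne : T.Nonempty := by
    refine ⟨{v}, ?_⟩
    simp [hT, SimpleGraph.isClique_singleton]
  obtain ⟨C, hC, hmax⟩ := T.exists_max_image Finset.card hTne
  rw [hT, Finset.mem_filter] at hC
  refine ⟨C, ?_, hC.2.2⟩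
  rw [maxCliques, Finset.mem_filter]
  refine ⟨Finset.mem_univ _, hC.2.1, fun u hu => ?_⟩
  by_contra hun
  have hmem : insert u C ∈ T := by
    rw [hT, Finset.mem_filter]
    exact ⟨Finset.mem_univ _, by rw [Finset.coe_insert]; exact hu,
      Finset.mem_insert_of_mem hC.2.2⟩
  have := hmax _ hmem
  rw [Finset.card_insert_of_notMem hun] at this
  omega

lemma sum_powerset_neg_one_real {α : Type*} [DecidableEq α] (s : Finset α) :
    ∑ A ∈ s.powerset, (-1 : ℝ) ^ A.card = if s = ∅ then 1 else 0 := by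
  have := @Finset.sum_powerset_neg_one_pow_card α _ s
  have h2 : ∑ A ∈ s.powerset, (-1 : ℝ) ^ A.card
      = ((∑ A ∈ s.powerset, (-1 : ℤ) ^ A.card : ℤ) : ℝ) := by
    push_cast
    rfl
  rw [h2, this]
  split <;> simp

/-- For odd `t ≥ 1` and `p*(S) = |S|/(t+1)`, every homomorphism `φ` from `F₁`
(two isolated vertices plus `t` copies of `P_{t+2}`) to `P_t` satisfies
`Σ_S −(−1)^{|S|} p*(φ(∩S)) = t + 2`. -/
theorem cliqueSum_pStar (t : ℕ) (ht : Odd t) (ht1 : 1 ≤ t)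
    (φ : F₁ t →g SimpleGraph.pathGraph (t + 1)) :
    cliqueSum (F₁ t)
      (fun S : Finset (Fin (t + 1)) => (S.card : ℝ) / (t + 1)) φ = t + 2 := by
  classical
  set V' := (Fin 2 ⊕ Fin t × Fin (t + 3))
  have htne : ((t : ℝ) + 1) ≠ 0 := by positivity
  set M := maxCliques (F₁ t) with hMdef
  rw [cliqueSum]
  have hclique : ∀ C ∈ M, (F₁ t).IsClique (C : Set V') := by
    intro C hC
    simp only [hMdef, maxCliques, Finset.mem_filter] at hC
    exact hC.2.1
  -- image under φ of a subset of a clique has the same cardinality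
  have himg : ∀ S ∈ M.powerset.filter (· ≠ ∅),
      ((((S.inf id).image φ).card : ℝ)) = (((S.inf id).card : ℝ)) := by
    intro S hS
    rw [Finset.mem_filter, Finset.mem_powerset] at hS
    obtain ⟨C, hCS⟩ := Finset.nonempty_iff_ne_empty.mpr hS.2
    have hsub : S.inf id ⊆ C := Finset.le_iff_subset.mp (Finset.inf_le hCS)
    have hCcl := hclique C (hS.1 hCS)
    norm_cast
    apply Finset.card_image_of_injOn
    intro x hx y hy hxy
    by_contra hne
    have hadj := hCcl (Finset.mem_coe.mpr (hsub (Finset.mem_coe.mp hx)))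
      (Finset.mem_coe.mpr (hsub (Finset.mem_coe.mp hy))) hne
    exact (φ.map_adj hadj).ne hxy
  -- cardinality as a sum of indicators
  have hcard : ∀ A : Finset V',
      ((A.card : ℝ)) = ∑ v : V', if v ∈ A then (1 : ℝ) else 0 := by
    intro A
    rw [Finset.sum_boole]
    congr 1
    rw [Finset.filter_univ_mem]
  -- rewrite each summand
  have step : ∀ S ∈ M.powerset.filter (· ≠ ∅),
      -(-1 : ℝ) ^ S.card * ((((S.inf id).image φ).card : ℝ) / ((t : ℝ) + 1))
      = (∑ v : V', if v ∈ S.inf id then -(-1 : ℝ) ^ S.card else 0) / ((t : ℝ) + 1) := by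
    intro S hS
    rw [himg S hS, hcard, ← mul_div_assoc, Finset.mul_sum]
    congr 1
    refine Finset.sum_congr rfl fun v _ => ?_
    split <;> simp
  rw [Finset.sum_congr rfl step, ← Finset.sum_div, Finset.sum_comm]
  -- evaluate the inner sum for each vertex
  have key : ∀ v : V', ∑ S ∈ M.powerset.filter (· ≠ ∅),
      (if v ∈ S.inf id then -(-1 : ℝ) ^ S.card else 0) = 1 := by
    intro v
    rw [← Finset.sum_filter]
    have hset : (M.powerset.filter (· ≠ ∅)).filter (fun S => v ∈ S.inf id)
        = (M.filter (fun C => v ∈ C)).powerset.filter (· ≠ ∅) := by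
      ext S
      simp only [Finset.mem_filter, Finset.mem_powerset]
      constructor
      · rintro ⟨⟨hSM, hSne⟩, hv⟩
        refine ⟨fun C hC => Finset.mem_filter.mpr ⟨hSM hC, ?_⟩, hSne⟩
        exact Finset.le_iff_subset.mp (Finset.inf_le hC) hv
      · rintro ⟨hSMv, hSne⟩
        refine ⟨⟨fun C hC => (Finset.mem_filter.mp (hSMv hC)).1, hSne⟩, ?_⟩
        have hle : {v} ≤ S.inf id := Finset.le_inf fun C hC =>
          Finset.singleton_subset_iff.mpr (Finset.mem_filter.mp (hSMv hC)).2
        exact hle (Finset.mem_singleton_self v)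
    rw [hset]
    set Mv := M.filter (fun C => v ∈ C) with hMv
    have hMvnonempty : Mv ≠ ∅ := by
      obtain ⟨C, hCM, hvC⟩ := exists_mem_maxCliques (F₁ t) v
      exact Finset.ne_empty_of_mem (Finset.mem_filter.mpr ⟨hCM, hvC⟩)
    have htot : ∑ S ∈ Mv.powerset, -(-1 : ℝ) ^ S.card = 0 := by
      rw [Finset.sum_neg_distrib, sum_powerset_neg_one_real, if_neg hMvnonempty, neg_zero]
    have hsplit := Finset.add_sum_erase Mv.powerset
      (fun S => -(-1 : ℝ) ^ S.card) (Finset.empty_mem_powerset Mv)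
    rw [htot] at hsplit
    simp only [Finset.card_empty, pow_zero] at hsplit
    have herase : Mv.powerset.filter (· ≠ ∅) = Mv.powerset.erase ∅ :=
      Finset.filter_ne' _ _
    rw [herase]
    linarith
  rw [Finset.sum_congr rfl (fun v _ => key v)]
  have hcardV : (Fintype.card V' : ℝ) = 2 + t * (t + 3) := by
    simp [V']
  rw [Finset.sum_const, Finset.card_univ, nsmul_eq_mul, mul_one]
  rw [hcardV]
  field_simp
  ring
end

section
/- For odd t ≥ 1, there exists a homomorphism ψ from the disjoint union F_1 of two isolated vertices and t copies of P_{t+2} to P_t such that for every normalized P_t-polymatroidal function p, Σ_{S ⊆ MaxCliques(F_1)} −(−1)^{|S|} p(ψ(∩S)) = t+2. -/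
/-!
The maximal cliques of `F₁ t` are its two isolated vertices and the edges of its paths, and no
vertex lies in three of them. Hence only single cliques and pairs of consecutive edges contribute,
and the clique sum is `∑_C p(ψ C) - ∑_v p{ψ v}`, over maximal cliques `C` and inner path
vertices `v`. The `i`-th copy of `P_{t+2}` is sent to the walk `0, …, i, i+1, i, i+1, …, t`, which
uses every edge `{k, k+1}` of `P_t` once and `{i, i+1}` twice more, and passes through every inner
vertex once and through `i` and `i+1` once more. Summing over `i` and adding the two endpoints gives
`(t + 2) (p{0} + ∑_k (p{k, k+1} - p{k}))`, and modularity across each cut vertex of `P_t`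
telescopes the bracket to `p(V(P_t)) = 1`.
-/

open Finset SimpleGraph Fin.NatCast

theorem mem_maxCliques_iff_of_cliqueFree_three {V : Type*} [Fintype V] [DecidableEq V]
    [Nonempty V] {G : SimpleGraph V} (hG : G.CliqueFree 3) {s : Finset V} :
    s ∈ maxCliques G ↔
      (∃ v, (∀ w, ¬G.Adj v w) ∧ s = {v}) ∨ ∃ v w, G.Adj v w ∧ s = {v, w} := by
  simp only [maxCliques, mem_filter, mem_univ, true_and]
  constructor
  · rintro ⟨hs, hmax⟩
    obtain ⟨v, hv⟩ : s.Nonempty := by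
      refine s.eq_empty_or_nonempty.resolve_left fun hs₀ => ?_
      obtain ⟨u⟩ := ‹Nonempty V›
      simpa [hs₀] using hmax u (by simp [hs₀])
    by_cases hw : ∃ w ∈ s, w ≠ v
    · obtain ⟨w, hws, hwv⟩ := hw
      have hvw : G.Adj v w := hs hv hws hwv.symm
      refine Or.inr ⟨v, w, hvw, eq_of_subset_of_card_le (fun x hx => ?_) ?_⟩
      · by_contra hx'
        simp only [mem_insert, mem_singleton, not_or] at hx'
        exact hG {v, w, x} (is3Clique_triple_iff.2
          ⟨hvw, hs hv hx (Ne.symm hx'.1), hs hws hx (Ne.symm hx'.2)⟩)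
      · exact card_le_card (by simp [insert_subset_iff, hv, hws])
    · push Not at hw
      refine Or.inl ⟨v, fun w hvw => hvw.ne (hw w (hmax w ?_)).symm,
        eq_singleton_iff_unique_mem.2 ⟨hv, hw⟩⟩
      rw [eq_singleton_iff_unique_mem.2 ⟨hv, hw⟩, coe_singleton, Set.pair_comm]
      exact isClique_pair.2 fun _ => hvw
  · rintro (⟨v, hv, rfl⟩ | ⟨v, w, hvw, rfl⟩)
    · refine ⟨by simp, fun u hu => ?_⟩
      by_contra huv
      exact hv u (hu (by simp) (by simp) (Ne.symm (by simpa using huv)))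
    · refine ⟨by simpa [isClique_pair] using fun _ => hvw, fun u hu => ?_⟩
      by_contra hu'
      simp only [mem_insert, mem_singleton, not_or] at hu'
      simp only [coe_insert, coe_singleton] at hu
      exact hG {u, v, w} (is3Clique_triple_iff.2
        ⟨hu (by simp) (by simp) hu'.1, hu (by simp) (by simp) hu'.2, hvw⟩)

theorem sum_powerset_inf_eq_of_inf_eq_empty {ι α : Type*} [DecidableEq ι] [Fintype α]
    [DecidableEq α] {s : Finset ι} (X : ι → Finset α) {f : Finset α → ℝ} (hf : f ∅ = 0)
    (h3 : ∀ T ⊆ s, 3 ≤ #T → T.inf X = ∅) :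
    ∑ T ∈ s.powerset.filter (· ≠ ∅), -(-1 : ℝ) ^ #T * f (T.inf X) =
      ∑ c ∈ s, f (X c) - ∑ T ∈ s.powersetCard 2, f (T.inf X) := by
  have hsub : powersetCard 1 s ∪ powersetCard 2 s ⊆ s.powerset.filter (· ≠ ∅) := by
    intro T hT
    simp only [mem_union, mem_powersetCard] at hT
    simp only [mem_filter, mem_powerset, ← nonempty_iff_ne_empty, ← card_pos]
    rcases hT with ⟨hTs, hT⟩ | ⟨hTs, hT⟩ <;> exact ⟨hTs, by omega⟩
  have hvanish : ∀ T ∈ s.powerset.filter (· ≠ ∅), T ∉ powersetCard 1 s ∪ powersetCard 2 s →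
      -(-1 : ℝ) ^ #T * f (T.inf X) = 0 := by
    intro T hT hT'
    simp only [mem_union, mem_powersetCard, mem_filter, mem_powerset, not_or] at hT hT'
    have := card_pos.2 (nonempty_iff_ne_empty.2 hT.2)
    have h1 : #T ≠ 1 := fun h => hT'.1 ⟨hT.1, h⟩
    have h2 : #T ≠ 2 := fun h => hT'.2 ⟨hT.1, h⟩
    rw [h3 T hT.1 (by omega), hf, mul_zero]
  have hpairs : ∑ T ∈ powersetCard 2 s, -(-1 : ℝ) ^ #T * f (T.inf X) =
      -∑ T ∈ powersetCard 2 s, f (T.inf X) := by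
    rw [← sum_neg_distrib]
    exact sum_congr rfl fun T hT => by simp [(mem_powersetCard.1 hT).2]
  rw [← sum_subset hsub hvanish,
    sum_union (s.pairwise_disjoint_powersetCard (by decide : 1 ≠ 2)), hpairs, powersetCard_one,
    sum_map]
  simp [sub_eq_add_neg]

section PathGraph

variable {n : ℕ} {p : Finset (Fin (n + 1)) → ℝ}
  (hmod : ∀ A B : Finset (Fin (n + 1)),
    (∀ a ∈ A \ B, ∀ b ∈ B \ A, ¬(pathGraph (n + 1)).Adj a b) → p (A ∩ B) + p (A ∪ B) = p A + p B)
include hmod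

theorem pathGraph_segment_succ {m : ℕ} (hm : m + 1 ≤ n) :
    p (univ.filter (·.val ≤ m + 1)) = p (univ.filter (·.val ≤ m)) +
      p {(m : Fin (n + 1)), ((m + 1 : ℕ) : Fin (n + 1))} - p {(m : Fin (n + 1))} := by
  have hm₀ : ((m : Fin (n + 1)) : ℕ) = m := Fin.val_cast_of_lt (by omega)
  have hm₁ : (((m + 1 : ℕ) : Fin (n + 1)) : ℕ) = m + 1 := Fin.val_cast_of_lt (by omega)
  set A : Finset (Fin (n + 1)) := univ.filter (·.val ≤ m)
  set B : Finset (Fin (n + 1)) := {(m : Fin (n + 1)), ((m + 1 : ℕ) : Fin (n + 1))}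
  have hsep : ∀ a ∈ A \ B, ∀ b ∈ B \ A, ¬(pathGraph (n + 1)).Adj a b := by
    intro a ha b hb
    simp only [A, B, mem_sdiff, mem_filter, mem_univ, true_and, mem_insert, mem_singleton,
      Fin.ext_iff, hm₀, hm₁] at ha hb
    rw [pathGraph_adj]
    omega
  have hinter : A ∩ B = {(m : Fin (n + 1))} := by
    ext v
    simp only [A, B, mem_inter, mem_filter, mem_univ, true_and, mem_insert, mem_singleton,
      Fin.ext_iff, hm₀, hm₁]
    omega
  have hunion : A ∪ B = univ.filter (·.val ≤ m + 1) := by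
    ext v
    simp only [A, B, mem_union, mem_filter, mem_univ, true_and, mem_insert, mem_singleton,
      Fin.ext_iff, hm₀, hm₁]
    omega
  have := hmod A B hsep
  rw [hinter, hunion] at this
  linarith

theorem pathGraph_telescope :
    p univ = p {0} + ∑ k ∈ range n,
      (p {(k : Fin (n + 1)), ((k + 1 : ℕ) : Fin (n + 1))} - p {(k : Fin (n + 1))}) := by
  have key : ∀ m ≤ n, p (univ.filter (·.val ≤ m)) = p {0} + ∑ k ∈ range m,
      (p {(k : Fin (n + 1)), ((k + 1 : ℕ) : Fin (n + 1))} - p {(k : Fin (n + 1))}) := by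
    intro m
    induction m with
    | zero =>
      intro _
      rw [sum_range_zero, add_zero]
      congr 1
      ext v
      simp only [mem_filter, mem_univ, true_and, nonpos_iff_eq_zero, mem_singleton, Fin.ext_iff,
        Fin.val_zero]
    | succ m ih =>
      intro hm
      rw [pathGraph_segment_succ hmod hm, ih (by omega), sum_range_succ]
      ring
  rw [← key n le_rfl]
  congr 1
  ext v
  simp [Fin.is_le]

end PathGraph

namespace F₁

variable {t : ℕ}

theorem not_adj_inl_left (j : Fin 2) (v : Fin 2 ⊕ Fin t × Fin (t + 3)) :
    ¬(F₁ t).Adj (.inl j) v := by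
  cases v <;> simp [F₁]

theorem not_adj_inl_right (j : Fin 2) (v : Fin 2 ⊕ Fin t × Fin (t + 3)) :
    ¬(F₁ t).Adj v (.inl j) :=
  fun h => not_adj_inl_left j v h.symm

theorem adj_inr_inr {i j : Fin t} {a b : Fin (t + 3)} :
    (F₁ t).Adj (.inr (i, a)) (.inr (j, b)) ↔ i = j ∧ (pathGraph (t + 3)).Adj a b := by
  simp [F₁, boxProd_adj, and_comm]

theorem cliqueFree_three : (F₁ t).CliqueFree 3 := by
  intro s hs
  obtain ⟨u, v, w, huv, huw, hvw, -⟩ := is3Clique_iff.1 hs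
  rcases u with j | ⟨i, a⟩
  · exact not_adj_inl_left j v huv
  rcases v with j | ⟨i', b⟩
  · exact not_adj_inl_right j _ huv
  rcases w with j | ⟨i'', c⟩
  · exact not_adj_inl_right j _ huw
  simp only [adj_inr_inr, pathGraph_adj] at huv huw hvw
  omega

def clique : Fin 2 ⊕ Fin t × Fin (t + 2) → Finset (Fin 2 ⊕ Fin t × Fin (t + 3))
  | .inl j => {.inl j}
  | .inr (i, a) => {.inr (i, a.castSucc), .inr (i, a.succ)}

theorem inl_mem_clique {j : Fin 2} {c : Fin 2 ⊕ Fin t × Fin (t + 2)} :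
    .inl j ∈ clique c ↔ c = .inl j := by
  rcases c with k | ⟨i, a⟩ <;> simp [clique, eq_comm]

theorem inr_mem_clique {i : Fin t} {b : Fin (t + 3)} {c : Fin 2 ⊕ Fin t × Fin (t + 2)} :
    .inr (i, b) ∈ clique c ↔ ∃ a, c = .inr (i, a) ∧ (b.val = a.val ∨ b.val = a.val + 1) := by
  rcases c with k | ⟨i', a⟩
  · simp [clique]
  · simp only [clique, mem_insert, mem_singleton, Sum.inr.injEq, Prod.mk.injEq,
      Fin.ext_iff (a := b), Fin.val_castSucc, Fin.val_succ, ← and_or_left]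
    constructor
    · rintro ⟨rfl, h⟩
      exact ⟨a, ⟨rfl, rfl⟩, h⟩
    · rintro ⟨a, ⟨rfl, rfl⟩, h⟩
      exact ⟨rfl, h⟩

theorem clique_injective : (clique (t := t)).Injective := by
  rintro (j | ⟨i, a⟩) d h
  · exact (inl_mem_clique.1 (h ▸ by simp [clique])).symm
  · have h₁ : .inr (i, a.castSucc) ∈ clique d := h ▸ by simp [clique]
    have h₂ : .inr (i, a.succ) ∈ clique d := h ▸ by simp [clique]
    obtain ⟨a₁, rfl, ha₁⟩ := inr_mem_clique.1 h₁
    obtain ⟨a₂, ha₂, ha₂'⟩ := inr_mem_clique.1 h₂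
    simp only [Sum.inr.injEq, Prod.mk.injEq, true_and] at ha₂ ⊢
    subst ha₂
    simp only [Fin.val_castSucc, Fin.val_succ] at ha₁ ha₂'
    ext; omega

theorem exists_adj_inr (i : Fin t) (b : Fin (t + 3)) : ∃ v, (F₁ t).Adj (.inr (i, b)) v := by
  by_cases hb : b.val + 1 < t + 3
  · exact ⟨.inr (i, ⟨b + 1, hb⟩), adj_inr_inr.2 ⟨rfl, pathGraph_adj.2 (Or.inl rfl)⟩⟩
  · refine ⟨.inr (i, ⟨b - 1, by omega⟩), adj_inr_inr.2 ⟨rfl, pathGraph_adj.2 (Or.inr ?_)⟩⟩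
    simp only
    omega

theorem maxCliques_eq : maxCliques (F₁ t) = univ.map ⟨clique, clique_injective⟩ := by
  ext s
  rw [mem_maxCliques_iff_of_cliqueFree_three cliqueFree_three]
  simp only [mem_map, mem_univ, true_and, Function.Embedding.coeFn_mk]
  constructor
  · rintro (⟨v, hv, rfl⟩ | ⟨v, w, hvw, rfl⟩)
    · rcases v with j | ⟨i, b⟩
      · exact ⟨.inl j, rfl⟩
      · obtain ⟨w, hw⟩ := exists_adj_inr i b
        exact (hv w hw).elim
    · rcases v with j | ⟨i, a⟩
      · exact (not_adj_inl_left j w hvw).elim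
      rcases w with j | ⟨i', b⟩
      · exact (not_adj_inl_right j _ hvw).elim
      obtain ⟨rfl, hab⟩ := adj_inr_inr.1 hvw
      rcases pathGraph_adj.1 hab with hab | hab
      · exact ⟨.inr (i, ⟨a, by omega⟩), by simp only [clique]; congr; ext; simp [hab]⟩
      · refine ⟨.inr (i, ⟨b, by omega⟩), ?_⟩
        rw [pair_comm]
        simp only [clique]; congr; ext; simp [hab]
  · rintro ⟨j | ⟨i, a⟩, rfl⟩
    · exact Or.inl ⟨.inl j, not_adj_inl_left j, rfl⟩
    · exact Or.inr ⟨_, _, adj_inr_inr.2 ⟨rfl, pathGraph_adj.2 (Or.inl (by simp))⟩, rfl⟩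

-- The two edges of the `i`-th path that meet at its inner vertex `a + 1`.
def cliquePair : Fin t × Fin (t + 1) → Finset (Fin 2 ⊕ Fin t × Fin (t + 2))
  | (i, a) => {.inr (i, a.castSucc), .inr (i, a.succ)}

theorem cliquePair_injective : (cliquePair (t := t)).Injective := by
  rintro ⟨i, a⟩ ⟨j, b⟩ h
  have h' : .inr (i, a.castSucc) ∈ cliquePair (j, b) := h ▸ by simp [cliquePair]
  simp only [cliquePair, mem_insert, mem_singleton, Sum.inr.injEq, Prod.mk.injEq] at h'
  rcases h' with ⟨rfl, h'⟩ | ⟨rfl, h'⟩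
  · rw [Fin.castSucc_inj.1 h']
  · have h'' : .inr (i, a.succ) ∈ cliquePair (i, b) := h ▸ by simp [cliquePair]
    simp only [cliquePair, mem_insert, mem_singleton, Sum.inr.injEq, Prod.mk.injEq, true_and,
      Fin.ext_iff, Fin.val_castSucc, Fin.val_succ] at h' h''
    omega

theorem card_cliquePair (x : Fin t × Fin (t + 1)) : #(cliquePair x) = 2 :=
  card_pair (by simp [Fin.ext_iff])

theorem inf_cliquePair (x : Fin t × Fin (t + 1)) :
    (cliquePair x).inf clique = {.inr (x.1, x.2.castSucc.succ)} := by
  ext v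
  rcases x with ⟨i, a⟩
  rcases v with j | ⟨i', b⟩
  · simp [cliquePair, inl_mem_clique]
  · simp only [mem_inf, cliquePair, mem_insert, mem_singleton, forall_eq_or_imp, forall_eq,
      inr_mem_clique, Sum.inr.injEq, Prod.mk.injEq, and_assoc, exists_and_left, exists_eq_left',
      Fin.ext_iff (a := b), Fin.val_succ, Fin.val_castSucc]
    constructor
    · rintro ⟨rfl, h₁, -, h₂⟩
      exact ⟨rfl, by omega⟩
    · rintro ⟨rfl, h⟩
      exact ⟨rfl, by omega, rfl, by omega⟩

theorem exists_cliquePair_of_mem_clique {v : Fin 2 ⊕ Fin t × Fin (t + 3)}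
    {c d : Fin 2 ⊕ Fin t × Fin (t + 2)} (hc : v ∈ clique c) (hd : v ∈ clique d) (hcd : c ≠ d) :
    ∃ x, ∀ e, v ∈ clique e → e ∈ cliquePair x := by
  rcases v with j | ⟨i, b⟩
  · rw [inl_mem_clique] at hc hd
    exact (hcd (hc.trans hd.symm)).elim
  obtain ⟨a, rfl, ha⟩ := inr_mem_clique.1 hc
  obtain ⟨a', rfl, ha'⟩ := inr_mem_clique.1 hd
  have hne : a.val ≠ a'.val := fun h => hcd (by rw [Fin.ext h])
  refine ⟨(i, ⟨b - 1, by omega⟩), fun e he => ?_⟩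
  obtain ⟨a'', rfl, ha''⟩ := inr_mem_clique.1 he
  simp only [cliquePair, mem_insert, mem_singleton, Sum.inr.injEq, Prod.mk.injEq, true_and,
    Fin.ext_iff, Fin.val_castSucc, Fin.val_succ]
  omega

theorem eq_cliquePair_of_inf_nonempty {T : Finset (Fin 2 ⊕ Fin t × Fin (t + 2))} (hT : 2 ≤ #T)
    (hne : (T.inf clique).Nonempty) : ∃ x, T = cliquePair x := by
  obtain ⟨v, hv⟩ := hne
  rw [mem_inf] at hv
  obtain ⟨c, hc, d, hd, hcd⟩ := one_lt_card.1 hT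
  obtain ⟨x, hx⟩ := exists_cliquePair_of_mem_clique (hv c hc) (hv d hd) hcd
  refine ⟨x, eq_of_subset_of_card_le (fun e he => hx e (hv e he)) ?_⟩
  rwa [card_cliquePair]

theorem cliqueSum_eq {W : Type*} [DecidableEq W] {p : Finset W → ℝ} (hp : p ∅ = 0)
    (φ : Fin 2 ⊕ Fin t × Fin (t + 3) → W) :
    cliqueSum (F₁ t) p φ =
      ∑ c, p ((clique c).image φ) -
        ∑ x : Fin t × Fin (t + 1), p {φ (.inr (x.1, x.2.castSucc.succ))} := by
  have h3 : ∀ S ⊆ maxCliques (F₁ t), 3 ≤ #S → S.inf id = ∅ := by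
    intro S hS hS3
    rw [maxCliques_eq, subset_map_iff] at hS
    obtain ⟨T, -, rfl⟩ := hS
    rw [card_map] at hS3
    rw [inf_map, ← not_nonempty_iff_eq_empty]
    rintro hne
    obtain ⟨x, rfl⟩ := eq_cliquePair_of_inf_nonempty (by omega) hne
    rw [card_cliquePair] at hS3
    omega
  have hpairs : ∑ T ∈ powersetCard 2 univ, p ((T.inf clique).image φ) =
      ∑ x : Fin t × Fin (t + 1), p {φ (.inr (x.1, x.2.castSucc.succ))} := by
    rw [← sum_subset (s₁ := univ.map ⟨cliquePair, cliquePair_injective⟩), sum_map]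
    · simp [inf_cliquePair]
    · intro S hS
      obtain ⟨x, -, rfl⟩ := mem_map.1 hS
      exact mem_powersetCard.2 ⟨subset_univ _, card_cliquePair x⟩
    · intro T hT hT'
      suffices T.inf clique = ∅ by rw [this, image_empty, hp]
      by_contra hne
      obtain ⟨x, rfl⟩ :=
        eq_cliquePair_of_inf_nonempty (mem_powersetCard.1 hT).2.ge (nonempty_iff_ne_empty.2 hne)
      exact hT' (mem_map_of_mem _ (mem_univ x))
  rw [cliqueSum,
    sum_powerset_inf_eq_of_inf_eq_empty id (f := fun s => p (s.image φ)) (by simpa) h3,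
    maxCliques_eq, sum_map, powersetCard_map, sum_map]
  simp only [RelEmbedding.coe_toEmbedding, mapEmbedding_apply, inf_map]
  exact congrArg₂ _ rfl hpairs

end F₁

def tripleWalk (i b : ℕ) : ℕ := if b ≤ i + 1 then b else b - 2

theorem tripleWalk_of_le {i b : ℕ} (h : b ≤ i + 1) : tripleWalk i b = b := if_pos h

theorem tripleWalk_add_two {i b : ℕ} (h : i ≤ b) : tripleWalk i (b + 2) = b := by
  rw [tripleWalk, if_neg (by omega), Nat.add_sub_cancel]

theorem tripleWalk_lt {t i b : ℕ} (hi : i < t) (hb : b < t + 3) : tripleWalk i b < t + 1 := by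
  unfold tripleWalk
  split_ifs <;> omega

theorem sum_tripleWalk_edges (h : ℕ → ℕ → ℝ) (hsymm : ∀ j k, h j k = h k j) {i n : ℕ}
    (hin : i < n) :
    ∑ a ∈ range (n + 2), h (tripleWalk i a) (tripleWalk i (a + 1)) =
      ∑ k ∈ range n, h k (k + 1) + 2 * h i (i + 1) := by
  induction n, hin using Nat.le_induction with
  | base =>
    have hinit : ∀ a ∈ range (i + 1), h (tripleWalk i a) (tripleWalk i (a + 1)) = h a (a + 1) :=
      fun a ha => by
        rw [mem_range] at ha
        rw [tripleWalk_of_le (by omega), tripleWalk_of_le (by omega)]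
    rw [sum_range_succ, sum_range_succ, sum_congr rfl hinit, tripleWalk_of_le le_rfl,
      tripleWalk_add_two le_rfl, Nat.add_right_comm i 2 1, tripleWalk_add_two (Nat.le_succ i),
      hsymm (i + 1), Nat.succ_eq_add_one, sum_range_succ]
    ring
  | succ n hn ih =>
    rw [sum_range_succ, ih, sum_range_succ, tripleWalk_add_two (by omega),
      tripleWalk_add_two (by omega)]
    ring

theorem sum_tripleWalk_inner (g : ℕ → ℝ) {i n : ℕ} (hin : i < n) :
    ∑ a ∈ range (n + 1), g (tripleWalk i (a + 1)) + g 0 =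
      ∑ k ∈ range n, g k + g i + g (i + 1) := by
  induction n, hin using Nat.le_induction with
  | base =>
    have hinit : ∀ a ∈ range (i + 1), g (tripleWalk i (a + 1)) = g (a + 1) :=
      fun a ha => by
        rw [mem_range] at ha
        rw [tripleWalk_of_le (by omega)]
    rw [sum_range_succ, sum_congr rfl hinit, tripleWalk_add_two le_rfl, add_right_comm,
      ← sum_range_succ', sum_range_succ]
    ring
  | succ n hn ih =>
    rw [sum_range_succ, add_right_comm, ih, sum_range_succ, tripleWalk_add_two (by omega)]
    ring

theorem sum_tripleWalks (g : ℕ → ℝ) (h : ℕ → ℕ → ℝ) (hsymm : ∀ j k, h j k = h k j) (t : ℕ) :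
    g 0 + g t + ∑ i ∈ range t, ∑ a ∈ range (t + 2), h (tripleWalk i a) (tripleWalk i (a + 1)) -
        ∑ i ∈ range t, ∑ a ∈ range (t + 1), g (tripleWalk i (a + 1)) =
      (t + 2) * (g 0 + ∑ k ∈ range t, (h k (k + 1) - g k)) := by
  have hedges : ∑ i ∈ range t, ∑ a ∈ range (t + 2), h (tripleWalk i a) (tripleWalk i (a + 1)) =
      ∑ i ∈ range t, (∑ k ∈ range t, h k (k + 1) + 2 * h i (i + 1)) :=
    sum_congr rfl fun i hi => sum_tripleWalk_edges h hsymm (mem_range.1 hi)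
  have hinner : ∑ i ∈ range t, ∑ a ∈ range (t + 1), g (tripleWalk i (a + 1)) =
      ∑ i ∈ range t, (∑ k ∈ range t, g k + g i + g (i + 1) - g 0) :=
    sum_congr rfl fun i hi => by linarith [sum_tripleWalk_inner g (mem_range.1 hi)]
  have hshift : ∑ i ∈ range t, g (i + 1) = ∑ i ∈ range t, g i + g t - g 0 := by
    linarith [sum_range_succ g t, sum_range_succ' g t]
  rw [hedges, hinner]
  simp only [sum_add_distrib, sum_sub_distrib, sum_const, card_range, nsmul_eq_mul, ← mul_sum,
    hshift]
  ring

def walkMap (t : ℕ) : Fin 2 ⊕ Fin t × Fin (t + 3) → Fin (t + 1)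
  | .inl j => ![0, Fin.last t] j
  | .inr (i, b) => (tripleWalk i b : ℕ)

def walkHom (t : ℕ) : F₁ t →g pathGraph (t + 1) where
  toFun := walkMap t
  map_rel' := by
    rintro (j | ⟨i, a⟩) (k | ⟨i', b⟩) h
    · exact (F₁.not_adj_inl_left j _ h).elim
    · exact (F₁.not_adj_inl_left j _ h).elim
    · exact (F₁.not_adj_inl_right k _ h).elim
    obtain ⟨rfl, hab⟩ := F₁.adj_inr_inr.1 h
    rw [pathGraph_adj] at hab ⊢
    simp only [walkMap, Fin.val_cast_of_lt (tripleWalk_lt i.isLt a.isLt),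
      Fin.val_cast_of_lt (tripleWalk_lt i.isLt b.isLt)]
    unfold tripleWalk
    split_ifs <;> omega

theorem cliqueSum_walkHom {t : ℕ} {p : Finset (Fin (t + 1)) → ℝ} (hp : p ∅ = 0) :
    cliqueSum (F₁ t) p (walkHom t) = (t + 2) * (p {0} + ∑ k ∈ range t,
      (p {(k : Fin (t + 1)), ((k + 1 : ℕ) : Fin (t + 1))} - p {(k : Fin (t + 1))})) := by
  have hcliques : ∑ c, p ((F₁.clique c).image (walkHom t)) = p {0} + p {(t : Fin (t + 1))} +
      ∑ i ∈ range t, ∑ a ∈ range (t + 2),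
        p {((tripleWalk i a : ℕ) : Fin (t + 1)), ((tripleWalk i (a + 1) : ℕ) : Fin (t + 1))} := by
    simp [Fintype.sum_sum_type, Fintype.sum_prod_type, Fin.natCast_eq_last, F₁.clique, walkHom,
      walkMap, ← Fin.sum_univ_eq_sum_range]
  have hinner : ∑ x : Fin t × Fin (t + 1), p {walkHom t (.inr (x.1, x.2.castSucc.succ))} =
      ∑ i ∈ range t, ∑ a ∈ range (t + 1), p {((tripleWalk i (a + 1) : ℕ) : Fin (t + 1))} := by
    simp [Fintype.sum_prod_type, walkHom, walkMap, ← Fin.sum_univ_eq_sum_range]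
  have key := sum_tripleWalks (fun k => p {(k : Fin (t + 1))})
    (fun j k => p {(j : Fin (t + 1)), (k : Fin (t + 1))}) (fun _ _ => by rw [pair_comm]) t
  simp only [Nat.cast_zero] at key
  rw [F₁.cliqueSum_eq hp, hcliques, hinner, key]

theorem exists_hom_cliqueSum_general (t : ℕ) :
    ∃ ψ : F₁ t →g SimpleGraph.pathGraph (t + 1),
      ∀ p : Finset (Fin (t + 1)) → ℝ,
        IsPolymatroidal (SimpleGraph.pathGraph (t + 1)) p →
          cliqueSum (F₁ t) p ψ = t + 2 := by
  refine ⟨walkHom t, fun p hp => ?_⟩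
  rw [cliqueSum_walkHom hp.1, ← pathGraph_telescope hp.2.2.2.2, hp.2.1, mul_one]

/-- For odd `t ≥ 1` there is a homomorphism `ψ` from `F₁` (two isolated
vertices plus `t` copies of `P_{t+2}`) to `P_t` such that for every normalized
`P_t`-polymatroidal function `p`, `Σ_S −(−1)^{|S|} p(ψ(∩S)) = t + 2`. -/
theorem exists_hom_cliqueSum (t : ℕ) (ht : Odd t) (ht1 : 1 ≤ t) :
    ∃ ψ : F₁ t →g SimpleGraph.pathGraph (t + 1),
      ∀ p : Finset (Fin (t + 1)) → ℝ,
        IsPolymatroidal (SimpleGraph.pathGraph (t + 1)) p →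
          cliqueSum (F₁ t) p ψ = t + 2 :=
  exists_hom_cliqueSum_general t
end

section
/- The homomorphism domination exponent HDE(F_1; P_t) equals t+2 for odd t ≥ 1, where F_1 is the disjoint union of two isolated vertices and t copies of the path P_{t+2}. -/
/-- The number of graph homomorphisms from `F` to `G`. -/
noncomputable def homCount {α β : Type*} (F : SimpleGraph α) (G : SimpleGraph β) : ℕ :=
  Nat.card (F →g G)

/-- The homomorphism domination exponent `HDE(F₁; F₂)`: the supremum of all
`c` such that `|Hom(F₁; G)| ≥ |Hom(F₂; G)|^c` for every graph `G`. -/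
noncomputable def hde {α β : Type*} (F₁ : SimpleGraph α) (F₂ : SimpleGraph β) : ℝ :=
  sSup {c : ℝ | ∀ (n : ℕ) (G : SimpleGraph (Fin n)),
    (homCount F₁ G : ℝ) ≥ (homCount F₂ G : ℝ) ^ c}

/-!
Let `A` be the adjacency matrix of `G`, `w k = A ^ k *ᵥ 1` and `p k = ∑ₓ w k x`, so that
`P_k` has `p k` homomorphisms into `G`, and `F₁ t` has `n ^ 2 * p (t + 2) ^ t` of them.

The inequality `p t ^ (t + 2) ≤ n ^ 2 * p (t + 2) ^ t` is an entropy argument. Weight the walks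
of length `t` by their number and look at a step `x → y` with `j` edges before it and `i` after
it, of weight `w j x * A x y * w i y`. Gibbs' inequality against the weights
`w (i + 1) x * A x y * w (j + 1) y`, of total `p (t + 2)`, shows that the potential
`Φ k = ∑ₓ w k x * w (t - k) x * log (w k x / w (t - k) x)` grows by at most
`p t * log (p (t + 2) / p t)` from `k = i` to `k = i + 1`. As
`Φ t = -Φ 0 = ∑ₓ w t x * log (w t x)`, telescoping gives
`2 ∑ₓ w t x * log (w t x) ≤ t * p t * log (p (t + 2) / p t)`, and the left-hand side is at least
`2 * p t * log (p t / n)` because an entropy is at most `log n`.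

On `K₂` every path has exactly two homomorphisms, so the exponent `t + 2` cannot be improved.
-/

open Finset Real

theorem sum_mul_log_div_le {ι : Type*} [Fintype ι] (a u : ι → ℝ) (ha : ∀ i, 0 ≤ a i)
    (hu : ∀ i, 0 ≤ u i) (hau : ∀ i, 0 < a i → 0 < u i) :
    ∑ i, a i * log (u i / a i) ≤ (∑ i, a i) * log ((∑ i, u i) / ∑ i, a i) := by
  rcases (sum_nonneg fun i _ => ha i).eq_or_lt with hS | hS
  · have h0 : ∀ i, a i = 0 := fun i =>
      (sum_eq_zero_iff_of_nonneg fun i _ => ha i).mp hS.symm i (mem_univ i)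
    simp [h0]
  obtain ⟨i₀, -, hi₀⟩ := (sum_pos_iff_of_nonneg fun i _ => ha i).mp hS
  have hU : 0 < ∑ i, u i :=
    (hau i₀ hi₀).trans_le (single_le_sum (fun i _ => hu i) (mem_univ i₀))
  set S := ∑ i, a i
  set U := ∑ i, u i
  -- termwise `log x ≤ x - 1` at `x = (u i / a i) / (U / S)`
  have key (i : ι) : a i * log (u i / a i) ≤ a i * log (U / S) + (u i * S / U - a i) := by
    rcases (ha i).eq_or_lt with hi | hi
    · simp only [← hi, zero_mul, zero_add, sub_zero]
      exact div_nonneg (mul_nonneg (hu i) hS.le) hU.le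
    have hui := hau i hi
    have hlog := mul_le_mul_of_nonneg_left
      (log_le_sub_one_of_pos (x := u i * S / (a i * U)) (by positivity)) hi.le
    have hrhs : a i * (u i * S / (a i * U) - 1) = u i * S / U - a i := by field_simp
    rw [log_div (by positivity) (by positivity), log_mul hui.ne' hS.ne',
      log_mul hi.ne' hU.ne', hrhs] at hlog
    rw [log_div hui.ne' hi.ne', log_div hU.ne' hS.ne']
    linarith
  calc ∑ i, a i * log (u i / a i) ≤ ∑ i, (a i * log (U / S) + (u i * S / U - a i)) :=
        sum_le_sum fun i _ => key i
    _ = S * log (U / S) + (U * S / U - S) := by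
        rw [sum_add_distrib, sum_sub_distrib, ← sum_mul, ← sum_div, ← sum_mul]
    _ = S * log (U / S) := by field_simp; ring

theorem sum_mul_log_div_card_le_sum_mul_log {ι : Type*} [Fintype ι] (v : ι → ℝ)
    (hv : ∀ i, 0 ≤ v i) :
    (∑ i, v i) * log ((∑ i, v i) / Fintype.card ι) ≤ ∑ i, v i * log (v i) := by
  have h := sum_mul_log_div_le v 1 hv (fun _ => zero_le_one) fun _ _ => one_pos
  simp only [Pi.one_apply, one_div, log_inv, sum_const, card_univ, nsmul_eq_mul, mul_one,
    mul_neg, sum_neg_distrib] at h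
  rw [← inv_div, log_inv] at h
  linarith

namespace Matrix

variable {ι : Type*} [Fintype ι] [DecidableEq ι] (A : Matrix ι ι ℝ)

def walkVec (k : ℕ) : ι → ℝ := A ^ k *ᵥ 1

def walkTotal (k : ℕ) : ℝ := ∑ x, A.walkVec k x

@[simp] lemma walkVec_zero : A.walkVec 0 = 1 := by simp [walkVec]

lemma walkVec_succ (k : ℕ) : A.walkVec (k + 1) = A *ᵥ A.walkVec k := by
  rw [walkVec, walkVec, pow_succ', mulVec_mulVec]

lemma walkVec_succ_apply (k : ℕ) (x : ι) :
    A.walkVec (k + 1) x = ∑ y, A x y * A.walkVec k y := by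
  rw [walkVec_succ]; rfl

lemma walkTotal_zero : A.walkTotal 0 = Fintype.card ι := by simp [walkTotal]

/-- For symmetric `A`, the weight of the walks of length `i + j + 1` whose `(i + 1)`-st step is
`p.1 → p.2`. -/
def edgeWeight (i j : ℕ) (p : ι × ι) : ℝ := A.walkVec i p.1 * A p.1 p.2 * A.walkVec j p.2

/-- For symmetric `A`, `A.walkVec i x * A.walkVec j x` is the weight of the walks of length
`i + j` visiting `x` at time `i`. -/
noncomputable def walkLogGap (i j : ℕ) : ℝ :=
  ∑ x, A.walkVec i x * A.walkVec j x * (log (A.walkVec i x) - log (A.walkVec j x))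

lemma walkLogGap_zero_right (k : ℕ) :
    A.walkLogGap k 0 = ∑ x, A.walkVec k x * log (A.walkVec k x) := by
  simp [walkLogGap]

lemma walkLogGap_zero_left (k : ℕ) :
    A.walkLogGap 0 k = -∑ x, A.walkVec k x * log (A.walkVec k x) := by
  simp [walkLogGap, ← sum_neg_distrib]

lemma sum_edgeWeight_mul_fst (i j : ℕ) (f : ι → ℝ) :
    ∑ p, A.edgeWeight i j p * f p.1 = ∑ x, A.walkVec i x * A.walkVec (j + 1) x * f x := by
  rw [Fintype.sum_prod_type]
  refine sum_congr rfl fun x _ => ?_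
  rw [walkVec_succ_apply, mul_sum, sum_mul]
  exact sum_congr rfl fun y _ => by rw [edgeWeight]; ring

variable {A}

lemma IsSymm.sum_edgeWeight_mul_snd (hA : A.IsSymm) (i j : ℕ) (g : ι → ℝ) :
    ∑ p, A.edgeWeight i j p * g p.2 = ∑ y, A.walkVec (i + 1) y * A.walkVec j y * g y := by
  rw [Fintype.sum_prod_type, sum_comm]
  refine sum_congr rfl fun y _ => ?_
  rw [walkVec_succ_apply, sum_mul, sum_mul]
  exact sum_congr rfl fun x _ => by rw [edgeWeight, hA.apply x y]; ring

lemma IsSymm.dotProduct_walkVec (hA : A.IsSymm) (i j : ℕ) :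
    A.walkVec i ⬝ᵥ A.walkVec j = A.walkTotal (i + j) := by
  have h : A.walkVec i = 1 ᵥ* A ^ i := by
    rw [walkVec, ← vecMul_transpose, (hA.pow i).eq]
  rw [h, walkVec, ← dotProduct_mulVec, mulVec_mulVec, ← pow_add, one_dotProduct, walkTotal,
    walkVec]

lemma IsSymm.sum_edgeWeight (hA : A.IsSymm) (i j : ℕ) :
    ∑ p, A.edgeWeight i j p = A.walkTotal (i + j + 1) := by
  rw [add_assoc, ← hA.dotProduct_walkVec i (j + 1)]
  simpa [dotProduct] using A.sum_edgeWeight_mul_fst i j 1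

section Nonneg

variable (hnn : ∀ x y, 0 ≤ A x y)
include hnn

lemma walkVec_nonneg (k : ℕ) (x : ι) : 0 ≤ A.walkVec k x :=
  sum_nonneg fun y _ => mul_nonneg (pow_apply_nonneg hnn k x y) zero_le_one

lemma walkTotal_nonneg (k : ℕ) : 0 ≤ A.walkTotal k :=
  sum_nonneg fun x _ => walkVec_nonneg hnn k x

lemma edgeWeight_nonneg (i j : ℕ) (p : ι × ι) : 0 ≤ A.edgeWeight i j p :=
  mul_nonneg (mul_nonneg (walkVec_nonneg hnn i p.1) (hnn _ _)) (walkVec_nonneg hnn j p.2)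

lemma walkVec_succ_pos {k : ℕ} {x y : ι} (hxy : 0 < A x y) (hy : 0 < A.walkVec k y) :
    0 < A.walkVec (k + 1) x := by
  refine (mul_pos hxy hy).trans_le ?_
  rw [walkVec_succ_apply]
  exact single_le_sum (fun z _ => mul_nonneg (hnn x z) (walkVec_nonneg hnn k z)) (mem_univ y)

lemma pos_of_edgeWeight_pos {i j : ℕ} {p : ι × ι} (hp : 0 < A.edgeWeight i j p) :
    0 < A.walkVec i p.1 ∧ 0 < A p.1 p.2 ∧ 0 < A.walkVec j p.2 := by
  have h := pos_of_mul_pos_left hp (walkVec_nonneg hnn j p.2)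
  exact ⟨pos_of_mul_pos_left h (hnn _ _), pos_of_mul_pos_right h (walkVec_nonneg hnn i p.1),
    pos_of_mul_pos_right hp (mul_nonneg (walkVec_nonneg hnn i p.1) (hnn _ _))⟩

lemma walkLogGap_succ_sub_le (hA : A.IsSymm) (i j : ℕ) :
    A.walkLogGap (i + 1) j - A.walkLogGap i (j + 1) ≤
      A.walkTotal (i + j + 1) * log (A.walkTotal (i + j + 3) / A.walkTotal (i + j + 1)) := by
  have hends {p : ι × ι} (hp : 0 < A.edgeWeight j i p) :
      0 < A.walkVec (i + 1) p.1 ∧ 0 < A p.1 p.2 ∧ 0 < A.walkVec (j + 1) p.2 := by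
    obtain ⟨hx, hxy, hy⟩ := pos_of_edgeWeight_pos hnn hp
    exact ⟨walkVec_succ_pos hnn hxy hy, hxy, walkVec_succ_pos hnn (hA.apply p.1 p.2 ▸ hxy) hx⟩
  have hterm (p : ι × ι) :
      A.edgeWeight j i p * log (A.edgeWeight (i + 1) (j + 1) p / A.edgeWeight j i p) =
        A.edgeWeight j i p * (log (A.walkVec (i + 1) p.1) - log (A.walkVec j p.1)) +
          A.edgeWeight j i p * (log (A.walkVec (j + 1) p.2) - log (A.walkVec i p.2)) := by
    rcases (edgeWeight_nonneg hnn j i p).eq_or_lt with hp | hp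
    · rw [← hp]; ring
    obtain ⟨hx, hxy, hy⟩ := pos_of_edgeWeight_pos hnn hp
    obtain ⟨hx', -, hy'⟩ := hends hp
    simp only [edgeWeight]
    rw [log_div (by positivity) (by positivity), log_mul (by positivity) (by positivity),
      log_mul (by positivity) (by positivity), log_mul (by positivity) (by positivity),
      log_mul (by positivity) (by positivity)]
    ring
  calc A.walkLogGap (i + 1) j - A.walkLogGap i (j + 1)
      = ∑ p, A.edgeWeight j i p * log (A.edgeWeight (i + 1) (j + 1) p / A.edgeWeight j i p) := by
        rw [sum_congr rfl fun p _ => hterm p, sum_add_distrib,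
          sum_edgeWeight_mul_fst A j i fun x => log (A.walkVec (i + 1) x) - log (A.walkVec j x),
          hA.sum_edgeWeight_mul_snd j i fun y => log (A.walkVec (j + 1) y) - log (A.walkVec i y),
          walkLogGap, walkLogGap, sub_eq_add_neg, ← sum_neg_distrib]
        exact congrArg₂ _ (sum_congr rfl fun x _ => by ring) (sum_congr rfl fun x _ => by ring)
    _ ≤ (∑ p, A.edgeWeight j i p) *
          log ((∑ p, A.edgeWeight (i + 1) (j + 1) p) / ∑ p, A.edgeWeight j i p) :=
        sum_mul_log_div_le _ _ (edgeWeight_nonneg hnn j i) (edgeWeight_nonneg hnn _ _)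
          fun p hp => by obtain ⟨hx, hxy, hy⟩ := hends hp; exact mul_pos (mul_pos hx hxy) hy
    _ = _ := by
        rw [hA.sum_edgeWeight, hA.sum_edgeWeight, add_comm j,
          show i + 1 + (j + 1) + 1 = i + j + 3 by omega]

lemma two_mul_sum_mul_log_walkVec_le (hA : A.IsSymm) (t : ℕ) :
    2 * ∑ x, A.walkVec t x * log (A.walkVec t x) ≤
      t * (A.walkTotal t * log (A.walkTotal (t + 2) / A.walkTotal t)) := by
  have htelescope := sum_range_sub (fun k => A.walkLogGap k (t - k)) t
  simp only [Nat.sub_self, Nat.sub_zero, walkLogGap_zero_right, walkLogGap_zero_left] at htelescope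
  calc 2 * ∑ x, A.walkVec t x * log (A.walkVec t x)
      = ∑ k ∈ range t, (A.walkLogGap (k + 1) (t - (k + 1)) - A.walkLogGap k (t - k)) := by
        rw [htelescope]; ring
    _ ≤ ∑ _k ∈ range t, A.walkTotal t * log (A.walkTotal (t + 2) / A.walkTotal t) := by
        refine sum_le_sum fun k hk => ?_
        obtain ⟨j, rfl⟩ : ∃ j, t = k + j + 1 := ⟨t - k - 1, by grind⟩
        rw [show k + j + 1 - k = j + 1 by omega, show k + j + 1 - (k + 1) = j by omega]
        exact walkLogGap_succ_sub_le hnn hA k j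
    _ = _ := by rw [sum_const, card_range, nsmul_eq_mul]

lemma walkTotal_pos_of_walkTotal_succ_pos (hA : A.IsSymm) {k : ℕ}
    (hk : 0 < A.walkTotal (k + 1)) (m : ℕ) : 0 < A.walkTotal m := by
  obtain ⟨x, -, hx⟩ := (sum_pos_iff_of_nonneg fun x _ => walkVec_nonneg hnn _ x).mp hk
  rw [walkVec_succ_apply] at hx
  obtain ⟨y, -, hxy⟩ :=
    (sum_pos_iff_of_nonneg fun y _ => mul_nonneg (hnn x y) (walkVec_nonneg hnn k y)).mp hx
  have hxy : 0 < A x y := pos_of_mul_pos_left hxy (walkVec_nonneg hnn k y)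
  have hboth (m : ℕ) : 0 < A.walkVec m x ∧ 0 < A.walkVec m y := by
    induction m with
    | zero => simp
    | succ m ih =>
      exact ⟨walkVec_succ_pos hnn hxy ih.2, walkVec_succ_pos hnn (hA.apply x y ▸ hxy) ih.1⟩
  exact (hboth m).1.trans_le (single_le_sum (fun z _ => walkVec_nonneg hnn m z) (mem_univ x))

theorem walkTotal_pow_le (hA : A.IsSymm) (t : ℕ) :
    A.walkTotal t ^ (t + 2) ≤ (Fintype.card ι : ℝ) ^ 2 * A.walkTotal (t + 2) ^ t := by
  rcases t with _ | s
  · simp [walkTotal_zero]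
  rcases (walkTotal_nonneg hnn (s + 1)).eq_or_lt with h0 | hp
  · rw [← h0, zero_pow (by omega)]
    exact mul_nonneg (sq_nonneg _) (pow_nonneg (walkTotal_nonneg hnn _) _)
  have hP : 0 < A.walkTotal (s + 1 + 2) := walkTotal_pos_of_walkTotal_succ_pos hnn hA hp _
  have hn : (0 : ℝ) < Fintype.card ι := by
    rw [← walkTotal_zero A]; exact walkTotal_pos_of_walkTotal_succ_pos hnn hA hp 0
  have hentropy : A.walkTotal (s + 1) * log (A.walkTotal (s + 1) / Fintype.card ι) ≤
      ∑ x, A.walkVec (s + 1) x * log (A.walkVec (s + 1) x) :=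
    sum_mul_log_div_card_le_sum_mul_log _ (walkVec_nonneg hnn (s + 1))
  have htelescope := two_mul_sum_mul_log_walkVec_le hnn hA (s + 1)
  generalize A.walkTotal (s + 1) = p at *
  generalize A.walkTotal (s + 1 + 2) = P at *
  generalize (Fintype.card ι : ℝ) = n at *
  have hlog : log ((p / n) ^ 2) ≤ log ((P / p) ^ (s + 1)) := by
    rw [log_pow, log_pow]
    exact le_of_mul_le_mul_left (by linarith) hp
  rw [log_le_log_iff (by positivity) (by positivity), div_pow, div_pow,
    div_le_div_iff₀ (by positivity) (by positivity)] at hlog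
  rw [pow_add]
  linarith

end Nonneg

end Matrix

namespace SimpleGraph

variable {α β V : Type*} (G : SimpleGraph V)

def Hom.sumEquiv (H₁ : SimpleGraph α) (H₂ : SimpleGraph β) :
    (H₁ ⊕g H₂ →g G) ≃ (H₁ →g G) × (H₂ →g G) where
  toFun φ := (φ.comp Embedding.sumInl.toHom, φ.comp Embedding.sumInr.toHom)
  invFun ψ := ⟨Sum.elim ψ.1 ψ.2, fun {u v} h => by
    cases u <;> cases v <;> simp_all [ψ.1.map_rel, ψ.2.map_rel]⟩
  left_inv φ := by ext (u | u) <;> rfl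

def Hom.botEquiv : ((⊥ : SimpleGraph α) →g G) ≃ (α → V) where
  toFun φ := φ
  invFun f := ⟨f, fun h => h.elim⟩

def Hom.botBoxProdEquiv (H : SimpleGraph β) :
    (boxProd (⊥ : SimpleGraph α) H →g G) ≃ (α → (H →g G)) where
  toFun φ a := φ.comp (boxProdRight (⊥ : SimpleGraph α) H a).toHom
  invFun ψ := ⟨fun p => ψ p.1 p.2, fun {p q} h => by
    obtain ⟨⟨⟩, -⟩ | ⟨h, heq⟩ := boxProd_adj.mp h
    rw [← heq]
    exact (ψ p.1).map_rel h⟩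

lemma homCount_sum (H₁ : SimpleGraph α) (H₂ : SimpleGraph β) :
    homCount (H₁ ⊕g H₂) G = homCount H₁ G * homCount H₂ G := by
  rw [homCount, Nat.card_congr (Hom.sumEquiv G H₁ H₂), Nat.card_prod, homCount, homCount]

lemma homCount_bot [Finite α] : homCount (⊥ : SimpleGraph α) G = Nat.card V ^ Nat.card α := by
  rw [homCount, Nat.card_congr (Hom.botEquiv G), Nat.card_fun]

lemma homCount_bot_boxProd [Finite α] (H : SimpleGraph β) :
    homCount (boxProd (⊥ : SimpleGraph α) H) G = homCount H G ^ Nat.card α := by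
  rw [homCount, Nat.card_congr (Hom.botBoxProdEquiv G H), Nat.card_fun, homCount]

abbrev WalkTuple (m : ℕ) (x : V) : Type _ :=
  {f : Fin (m + 1) → V // f 0 = x ∧ ∀ i : Fin m, G.Adj (f i.castSucc) (f i.succ)}

def pathGraphHomEquiv (m : ℕ) : (pathGraph (m + 1) →g G) ≃ Σ x, G.WalkTuple m x where
  toFun φ := ⟨φ 0, φ, rfl, fun i => φ.map_rel (by simp [pathGraph_adj])⟩
  invFun s := ⟨s.2.1, fun {u v} h => by
    rcases pathGraph_adj.mp h with h | h
    · convert s.2.2.2 ⟨u, by omega⟩ using 2 <;> ext <;> simp [h]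
    · convert (s.2.2.2 ⟨v, by omega⟩).symm using 2 <;> ext <;> simp [h]⟩
  right_inv := by rintro ⟨x, f, rfl, hf⟩; rfl

def walkTupleSuccEquiv (m : ℕ) (x : V) :
    G.WalkTuple (m + 1) x ≃ Σ y : G.neighborSet x, G.WalkTuple m y where
  toFun f :=
    ⟨⟨f.1 1, by simpa [← f.2.1] using f.2.2 0⟩, Fin.tail f.1, rfl, fun i => f.2.2 i.succ⟩
  invFun s := ⟨Fin.cons x s.2.1, rfl, Fin.cases (by
    simp only [Fin.castSucc_zero, Fin.cons_zero, Fin.cons_succ, s.2.2.1]; exact s.1.2) s.2.2.2⟩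
  left_inv := by rintro ⟨f, rfl, hf⟩; simp
  right_inv s := Sigma.subtype_ext (Subtype.ext s.2.2.1) rfl

variable [Fintype V]

lemma natCast_card_walkTuple [DecidableEq V] [DecidableRel G.Adj] (m : ℕ) (x : V) :
    (Nat.card (G.WalkTuple m x) : ℝ) = (G.adjMatrix ℝ).walkVec m x := by
  induction m generalizing x with
  | zero =>
    have : Unique (G.WalkTuple 0 x) :=
      ⟨⟨fun _ => x, rfl, nofun⟩, fun f => Subtype.ext (funext fun i => by
        rw [Fin.fin_one_eq_zero i, f.2.1]; rfl)⟩
    simp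
  | succ m ih =>
    rw [Nat.card_congr (G.walkTupleSuccEquiv m x), Nat.card_sigma, Nat.cast_sum,
      Matrix.walkVec_succ, adjMatrix_mulVec_apply,
      sum_subtype _ (fun y => mem_neighborFinset G x y)]
    exact sum_congr rfl fun y _ => ih y

lemma natCast_homCount_pathGraph [DecidableEq V] [DecidableRel G.Adj] (m : ℕ) :
    (homCount (pathGraph (m + 1)) G : ℝ) = (G.adjMatrix ℝ).walkTotal m := by
  rw [homCount, Nat.card_congr (G.pathGraphHomEquiv m), Nat.card_sigma, Nat.cast_sum]
  exact sum_congr rfl fun x _ => G.natCast_card_walkTuple m x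

theorem homCount_pathGraph_pow_le (t : ℕ) :
    homCount (pathGraph (t + 1)) G ^ (t + 2) ≤
      Fintype.card V ^ 2 * homCount (pathGraph (t + 3)) G ^ t := by
  classical
  have h := (G.adjMatrix ℝ).walkTotal_pow_le (fun x y => by rw [adjMatrix_apply]; positivity)
    G.isSymm_adjMatrix t
  rw [← natCast_homCount_pathGraph, ← natCast_homCount_pathGraph] at h
  exact_mod_cast h

lemma homCount_pathGraph_of_isRegularOfDegree [DecidableRel G.Adj] {d : ℕ}
    (hG : G.IsRegularOfDegree d) (m : ℕ) :
    homCount (pathGraph (m + 1)) G = Fintype.card V * d ^ m := by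
  classical
  have hw (k : ℕ) : (G.adjMatrix ℝ).walkVec k = Function.const V ((d : ℝ) ^ k) := by
    induction k with
    | zero => simp
    | succ k ih =>
      funext x
      rw [Matrix.walkVec_succ, ih, adjMatrix_mulVec_const_apply_of_regular hG, pow_succ']
      rfl
  have h := G.natCast_homCount_pathGraph m
  rw [Matrix.walkTotal, hw] at h
  simp only [Function.const_apply, sum_const, card_univ, nsmul_eq_mul] at h
  exact_mod_cast h

end SimpleGraph

open SimpleGraph in
lemma homCount_pathGraph_pathGraph_two (m : ℕ) :
    homCount (pathGraph (m + 1)) (pathGraph 2) = 2 := by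
  classical
  rw [pathGraph_two_eq_top, homCount_pathGraph_of_isRegularOfDegree _ IsRegularOfDegree.top]
  simp

lemma homCount_F₁ {V : Type*} (G : SimpleGraph V) (t : ℕ) :
    homCount (F₁ t) G = Nat.card V ^ 2 * homCount (SimpleGraph.pathGraph (t + 3)) G ^ t := by
  rw [F₁, SimpleGraph.homCount_sum, SimpleGraph.homCount_bot, SimpleGraph.homCount_bot_boxProd,
    Nat.card_fin, Nat.card_fin]

lemma hde_eq_of_forall_rpow_le_of_eq {α β : Type*} {H₁ : SimpleGraph α} {H₂ : SimpleGraph β}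
    {c : ℝ} (hle : ∀ n (G : SimpleGraph (Fin n)), (homCount H₂ G : ℝ) ^ c ≤ homCount H₁ G)
    {m : ℕ} (G₀ : SimpleGraph (Fin m)) (hG₀ : 1 < homCount H₂ G₀)
    (heq : (homCount H₁ G₀ : ℝ) = (homCount H₂ G₀ : ℝ) ^ c) : hde H₁ H₂ = c := by
  refine IsGreatest.csSup_eq ⟨hle, fun c' hc' => ?_⟩
  exact (rpow_le_rpow_left_iff (by exact_mod_cast hG₀)).mp (heq ▸ hc' m G₀)

theorem hde_eq_general (t : ℕ) :
    hde (F₁ t) (SimpleGraph.pathGraph (t + 1)) = t + 2 := by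
  have hexp : (t : ℝ) + 2 = ((t + 2 : ℕ) : ℝ) := by push_cast; rfl
  refine hde_eq_of_forall_rpow_le_of_eq (fun n G => ?_) (SimpleGraph.pathGraph 2)
    (by rw [homCount_pathGraph_pathGraph_two]; norm_num) ?_
  · rw [hexp, rpow_natCast, homCount_F₁, Nat.card_eq_fintype_card]
    exact_mod_cast G.homCount_pathGraph_pow_le t
  · rw [hexp, rpow_natCast, homCount_F₁, homCount_pathGraph_pathGraph_two,
      homCount_pathGraph_pathGraph_two, Nat.card_fin, pow_add]
    push_cast
    ring

/-- For odd `t ≥ 1`, `HDE(F₁; P_t) = t + 2`, where `F₁` is the disjoint union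
of two isolated vertices and `t` copies of `P_{t+2}`. -/
theorem hde_eq (t : ℕ) (ht : Odd t) (ht1 : 1 ≤ t) :
    hde (F₁ t) (SimpleGraph.pathGraph (t + 1)) = t + 2 :=
  hde_eq_general t
end
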